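/- arXiv:1608.02182 — 3 statements merged into one kernel-verified Lean document; each statement's English description precedes it below -/
import Mathlib

section
/- Let (F,v) be a c-Bessel mapping for H with synthesis operator T_{F,v}. Then (F,v) is a c-fusion frame for H if and only if there exist a c-Bessel mapping (G,w) for H and a bounded operator Q: L²(X,F) → L²(X,G) such that T_{G,w} Q T*_{F,v} = I_H. -/
open MeasureTheory
open scoped ENNReal InnerProductSpace

noncomputable section

variable {H : Type} [NormedAddCommGroup H] [InnerProductSpace ℂ H] [CompleteSpace H]
variable {X : Type} [MeasurableSpace X]

open scoped Classical in
def projFn (W : Submodule ℂ H) (h : H) : H :=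
  if hW : IsClosed (W : Set H) then
    haveI : CompleteSpace W := hW.completeSpace_coe
    (W.orthogonalProjectionOnto h : H)
  else 0

structure IsCBessel (μ : Measure X) (F : X → Submodule ℂ H) (v : X → ℝ) (B : ℝ) : Prop where
  closed : ∀ x, IsClosed ((F x) : Set H)
  meas : ∀ h : H, AEStronglyMeasurable (fun x => projFn (F x) h) μ
  bessel : ∀ h : H,
    ∫⁻ x, ENNReal.ofReal ((v x) ^ 2 * ‖projFn (F x) h‖ ^ 2) ∂μ ≤ ENNReal.ofReal (B * ‖h‖ ^ 2)

structure IsCFusionFrame (μ : Measure X) (F : X → Submodule ℂ H) (v : X → ℝ)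
    (A B : ℝ) extends IsCBessel μ F v B : Prop where
  posA : 0 < A
  lower : ∀ h : H,
    ENNReal.ofReal (A * ‖h‖ ^ 2) ≤ ∫⁻ x, ENNReal.ofReal ((v x) ^ 2 * ‖projFn (F x) h‖ ^ 2) ∂μ

def L2F (μ : Measure X) (F : X → Submodule ℂ H) : Submodule ℂ (Lp H 2 μ) where
  carrier := {f | ∀ᵐ x ∂μ, f x ∈ F x}
  add_mem' := by
    intro f g hf hg
    filter_upwards [hf, hg, Lp.coeFn_add f g] with x h1 h2 h3
    rw [h3]
    exact add_mem h1 h2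
  zero_mem' := by
    filter_upwards [Lp.coeFn_zero H 2 μ] with x h1
    rw [h1]; exact zero_mem _
  smul_mem' := by
    intro c f hf
    filter_upwards [hf, Lp.coeFn_smul c f] with x h1 h2
    rw [h2]
    exact Submodule.smul_mem _ _ h1

def IsSynthesis (μ : Measure X) (F : X → Submodule ℂ H) (v : X → ℝ)
    (T : L2F μ F →L[ℂ] H) : Prop :=
  ∀ (f : L2F μ F) (h : H),
    (⟪T f, h⟫_ℂ : ℂ) = ∫ x, (v x : ℂ) * (⟪(↑f : Lp H 2 μ) x, h⟫_ℂ : ℂ) ∂μ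

/-! The analysis operator `T*` sends `h` to `x ↦ v x • π_{F x} h`, so the frame integral of `h`
is `‖T* h‖²` and the lower frame bound says exactly that `T*` is bounded below. Then the frame
operator `S = T T*` is invertible, and `Q = T* S⁻² T` gives `T Q T* = S S⁻² S = 1`. Conversely,
`T_G Q T* = 1` forces `‖h‖ ≤ ‖T_G Q‖ ‖T* h‖`. -/

section Hilbert

open ContinuousLinearMap

variable {𝕜 E F : Type*} [RCLike 𝕜] [NormedAddCommGroup E] [InnerProductSpace 𝕜 E]
  [CompleteSpace E] [NormedAddCommGroup F] [InnerProductSpace 𝕜 F] [CompleteSpace F]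

lemma isUnit_comp_adjoint_of_le_norm_adjoint_sq (T : E →L[𝕜] F) {A : ℝ} (hA : 0 < A)
    (hlow : ∀ y, A * ‖y‖ ^ 2 ≤ ‖adjoint T y‖ ^ 2) : IsUnit (T ∘L adjoint T) := by
  refine isUnit_of_forall_le_norm_inner_map _ (c := ⟨A, hA.le⟩) hA fun y => ?_
  calc ‖y‖ ^ 2 * A = A * ‖y‖ ^ 2 := mul_comm _ _
    _ ≤ ‖adjoint T y‖ ^ 2 := hlow y
    _ = ‖⟪(T ∘L adjoint T) y, y⟫_𝕜‖ := by
      rw [comp_apply, ← adjoint_inner_right, inner_self_eq_norm_sq_to_K, norm_pow,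
        RCLike.norm_ofReal, abs_norm]

theorem exists_comp_comp_adjoint_eq_id (T : E →L[𝕜] F) {A : ℝ} (hA : 0 < A)
    (hlow : ∀ y, A * ‖y‖ ^ 2 ≤ ‖adjoint T y‖ ^ 2) :
    ∃ Q : E →L[𝕜] E, T ∘L (Q ∘L adjoint T) = ContinuousLinearMap.id 𝕜 F := by
  obtain ⟨S, hS⟩ := isUnit_comp_adjoint_of_le_norm_adjoint_sq T hA hlow
  refine ⟨adjoint T ∘L (↑(S⁻¹ * S⁻¹) : F →L[𝕜] F) ∘L T, ?_⟩
  change (T ∘L adjoint T) * ↑(S⁻¹ * S⁻¹) * (T ∘L adjoint T) = 1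
  rw [← hS, Units.val_mul, ← mul_assoc, S.mul_inv, one_mul, S.inv_mul]

end Hilbert

lemma exists_pos_mul_sq_le_norm_sq_of_comp_eq_id {𝕜 E F : Type*} [NontriviallyNormedField 𝕜]
    [NormedAddCommGroup E] [NormedSpace 𝕜 E] [NormedAddCommGroup F] [NormedSpace 𝕜 F]
    {K : F →L[𝕜] E} {L : E →L[𝕜] F} (h : L.comp K = ContinuousLinearMap.id 𝕜 F) :
    ∃ A > 0, ∀ y, A * ‖y‖ ^ 2 ≤ ‖K y‖ ^ 2 := by
  refine ⟨(‖L‖ ^ 2 + 1)⁻¹, by positivity, fun y => ?_⟩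
  have hy : ‖y‖ ≤ ‖L‖ * ‖K y‖ := by
    simpa [← ContinuousLinearMap.comp_apply, h] using L.le_opNorm (K y)
  rw [inv_mul_le_iff₀ (by positivity)]
  nlinarith [norm_nonneg y, mul_nonneg (norm_nonneg L) (norm_nonneg (K y)), sq_nonneg ‖K y‖]

lemma projFn_mem (W : Submodule ℂ H) (h : H) : projFn W h ∈ W := by
  unfold projFn
  split
  · exact Submodule.coe_mem _
  · exact zero_mem _

lemma inner_projFn_right_of_mem {W : Submodule ℂ H} (hW : IsClosed (W : Set H)) {u : H}
    (hu : u ∈ W) (h : H) : ⟪u, projFn W h⟫_ℂ = ⟪u, h⟫_ℂ := by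
  have : CompleteSpace W := hW.completeSpace_coe
  rw [projFn, dif_pos hW]
  exact W.inner_orthogonalProjectionOnto_eq_of_mem_left ⟨u, hu⟩ h

lemma norm_ofReal_smul_sq {E : Type*} [NormedAddCommGroup E] [NormedSpace ℂ E] (r : ℝ) (u : E) :
    ‖(r : ℂ) • u‖ ^ 2 = r ^ 2 * ‖u‖ ^ 2 := by
  rw [norm_smul, Complex.norm_real, Real.norm_eq_abs, mul_pow, sq_abs]

namespace IsCBessel

variable {μ : Measure X} {F : X → Submodule ℂ H} {v : X → ℝ} {B : ℝ}

lemma memLp_smul_projFn (hB : IsCBessel μ F v B) (hv : Measurable v) (h : H) :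
    MemLp (fun x => (v x : ℂ) • projFn (F x) h) 2 μ := by
  have hm : AEStronglyMeasurable (fun x => (v x : ℂ) • projFn (F x) h) μ :=
    (Complex.measurable_ofReal.comp hv).aestronglyMeasurable.smul (hB.meas h)
  refine (memLp_two_iff_integrable_sq_norm hm).2 ⟨hm.norm.pow 2, ?_⟩
  rw [hasFiniteIntegral_iff_ofReal (.of_forall fun x => by positivity)]
  simp_rw [norm_ofReal_smul_sq]
  exact (hB.bessel h).trans_lt ENNReal.ofReal_lt_top

lemma smul_projFn_mem_L2F (hB : IsCBessel μ F v B) (hv : Measurable v) (h : H) :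
    (hB.memLp_smul_projFn hv h).toLp _ ∈ L2F μ F := by
  filter_upwards [MemLp.coeFn_toLp (hB.memLp_smul_projFn hv h)] with x hx
  rw [hx]
  exact Submodule.smul_mem _ _ (projFn_mem _ _)

end IsCBessel

namespace IsSynthesis

variable {μ : Measure X} {F : X → Submodule ℂ H} {v : X → ℝ} {B : ℝ}
  [CompleteSpace (L2F μ F)] {T : L2F μ F →L[ℂ] H}

lemma adjoint_apply (hT : IsSynthesis μ F v T) (hB : IsCBessel μ F v B) (hv : Measurable v)
    (h : H) : ContinuousLinearMap.adjoint T h =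
      ⟨(hB.memLp_smul_projFn hv h).toLp _, hB.smul_projFn_mem_L2F hv h⟩ := by
  refine ext_inner_left ℂ fun f => ?_
  rw [ContinuousLinearMap.adjoint_inner_right, hT f h, Submodule.coe_inner, L2.inner_def]
  refine integral_congr_ae ?_
  filter_upwards [f.2, MemLp.coeFn_toLp (hB.memLp_smul_projFn hv h)] with x hfx hx
  rw [hx, inner_smul_right, inner_projFn_right_of_mem (hB.closed x) hfx]

lemma lintegral_eq_norm_adjoint_sq (hT : IsSynthesis μ F v T) (hB : IsCBessel μ F v B)
    (hv : Measurable v) (h : H) :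
    ∫⁻ x, ENNReal.ofReal ((v x) ^ 2 * ‖projFn (F x) h‖ ^ 2) ∂μ
      = ENNReal.ofReal (‖ContinuousLinearMap.adjoint T h‖ ^ 2) := by
  have hf := hB.memLp_smul_projFn hv h
  have hint := (memLp_two_iff_integrable_sq_norm hf.1).1 hf
  simp_rw [norm_ofReal_smul_sq] at hint
  rw [hT.adjoint_apply hB hv,
    ← ofReal_integral_eq_lintegral_ofReal hint (.of_forall fun x => by positivity)]
  congr 1
  rw [Submodule.coe_norm, ← inner_self_eq_norm_sq (𝕜 := ℂ), L2.inner_def,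
    ← integral_re (L2.integrable_inner _ _)]
  refine integral_congr_ae ?_
  filter_upwards [hf.coeFn_toLp] with x hx
  rw [hx, inner_self_eq_norm_sq, norm_ofReal_smul_sq]

end IsSynthesis

theorem statement4_general {μ : Measure X} {F : X → Submodule ℂ H} {v : X → ℝ} {B : ℝ}
    (hv : Measurable v) (hB : IsCBessel μ F v B) [CompleteSpace ↥(L2F μ F)]
    (T : L2F μ F →L[ℂ] H) (hT : IsSynthesis μ F v T) :
    (∃ A : ℝ, IsCFusionFrame μ F v A B) ↔
      ∃ (G : X → Submodule ℂ H) (w : X → ℝ) (BG : ℝ), IsCBessel μ G w BG ∧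
        ∃ TG : L2F μ G →L[ℂ] H, IsSynthesis μ G w TG ∧
          ∃ Q : (L2F μ F : Type) →L[ℂ] (L2F μ G : Type),
            TG.comp (Q.comp (ContinuousLinearMap.adjoint T)) = ContinuousLinearMap.id ℂ H := by
  have hframe := hT.lintegral_eq_norm_adjoint_sq hB hv
  constructor
  · rintro ⟨A, hA⟩
    refine ⟨F, v, B, hB, T, hT, exists_comp_comp_adjoint_eq_id T hA.posA fun h => ?_⟩
    have hlow := hA.lower h
    rwa [hframe, ENNReal.ofReal_le_ofReal_iff (by positivity)] at hlow
  · rintro ⟨G, w, BG, -, TG, -, Q, hQ⟩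
    obtain ⟨A, hA, hlow⟩ := exists_pos_mul_sq_le_norm_sq_of_comp_eq_id (L := TG.comp Q) hQ
    exact ⟨A, hB, hA, fun h => (hframe h).symm ▸ ENNReal.ofReal_le_ofReal (hlow h)⟩

/-- A c-Bessel mapping `(F, v)` with synthesis operator `T_{F,v}` is a
c-fusion frame iff there exist a c-Bessel mapping `(G, w)` and a bounded operator
`Q : L²(X,F) → L²(X,G)` with `T_{G,w} Q T*_{F,v} = I_H`. -/
theorem statement4 {μ : Measure X} {F : X → Submodule ℂ H} {v : X → ℝ} {B : ℝ}
    (hv : Measurable v) (hv0 : ∀ x, 0 ≤ v x) (hvne : ∀ᵐ x ∂μ, v x ≠ 0)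
    (hB : IsCBessel μ F v B) [CompleteSpace ↥(L2F μ F)]
    (T : L2F μ F →L[ℂ] H) (hT : IsSynthesis μ F v T) :
    (∃ A : ℝ, IsCFusionFrame μ F v A B) ↔
      ∃ (G : X → Submodule ℂ H) (w : X → ℝ) (BG : ℝ), IsCBessel μ G w BG ∧
        ∃ TG : L2F μ G →L[ℂ] H, IsSynthesis μ G w TG ∧
          ∃ Q : (L2F μ F : Type) →L[ℂ] (L2F μ G : Type),
            TG.comp (Q.comp (ContinuousLinearMap.adjoint T)) = ContinuousLinearMap.id ℂ H :=
  statement4_general hv hB T hT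
end
end

section
/- Let (F,v) be a c-fusion frame for H with bounds A_{F,v} and B_{F,v}. Then A_{F,v} · dim H ≤ ∫_X v²(x) dim F(x) dμ(x) ≤ B_{F,v} · dim H. In particular if dim H < ∞, then A_{F,v} ≤ ∫_X v²(x) dμ(x). -/
open MeasureTheory
open scoped ENNReal InnerProductSpace

noncomputable section

variable {H : Type} [NormedAddCommGroup H] [InnerProductSpace ℂ H] [CompleteSpace H]
variable {X : Type} [MeasurableSpace X]

/-! Testing the frame inequalities on an orthonormal family `e₁, …, eₙ` and summing gives
`n · A ≤ ∫ v² ∑ᵢ ‖π_{F x} eᵢ‖² ≤ ∫ v² dim F(x)`: expanding `π_W eᵢ` in an orthonormal basis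
`(b_j)` of `W` and applying Bessel's inequality for the `eᵢ` to each `b_j` bounds `∑ᵢ ‖π_W eᵢ‖²`
by `dim W`. Letting `n` run up to `dim H` gives the lower bound.
For an orthonormal basis of a finite-dimensional `H` this bound is an equality (Parseval), which
gives the upper bound; if `dim H = ∞` the upper bound is `∞` because `B ≥ A > 0`.
The last claim follows by cancelling `dim H` in `A · dim H ≤ ∫ v² dim F(x) ≤ (∫ v²) · dim H`. -/

section OrthogonalProjection

variable {𝕜 E ι κ : Type*} [RCLike 𝕜] [NormedAddCommGroup E] [InnerProductSpace 𝕜 E]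
  [Fintype ι] [Fintype κ]

theorem OrthonormalBasis.norm_sq_orthogonalProjectionOnto {U : Submodule 𝕜 E}
    [U.HasOrthogonalProjection] (b : OrthonormalBasis κ 𝕜 U) (x : E) :
    ‖(U.orthogonalProjectionOnto x : E)‖ ^ 2 = ∑ j, ‖⟪(b j : E), x⟫_𝕜‖ ^ 2 := by
  change ‖U.orthogonalProjectionOnto x‖ ^ 2 = _
  rw [← b.sum_sq_norm_inner_right]
  simp only [Submodule.inner_orthogonalProjectionOnto_eq_of_mem_left]

theorem OrthonormalBasis.sum_norm_sq_orthogonalProjectionOnto_eq {U : Submodule 𝕜 E}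
    [U.HasOrthogonalProjection] (b : OrthonormalBasis κ 𝕜 U) (e : ι → E) :
    ∑ i, ‖(U.orthogonalProjectionOnto (e i) : E)‖ ^ 2 = ∑ j, ∑ i, ‖⟪e i, (b j : E)⟫_𝕜‖ ^ 2 := by
  simp only [b.norm_sq_orthogonalProjectionOnto, norm_inner_symm (e _)]
  exact Finset.sum_comm

theorem Orthonormal.sum_norm_sq_orthogonalProjectionOnto_le {e : ι → E} (he : Orthonormal 𝕜 e)
    (U : Submodule 𝕜 E) [FiniteDimensional 𝕜 U] :
    ∑ i, ‖(U.orthogonalProjectionOnto (e i) : E)‖ ^ 2 ≤ Module.finrank 𝕜 U := by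
  let b := stdOrthonormalBasis 𝕜 U
  calc ∑ i, ‖(U.orthogonalProjectionOnto (e i) : E)‖ ^ 2
      = ∑ j, ∑ i, ‖⟪e i, (b j : E)⟫_𝕜‖ ^ 2 := b.sum_norm_sq_orthogonalProjectionOnto_eq e
    _ ≤ ∑ j, ‖(b j : E)‖ ^ 2 := Finset.sum_le_sum fun j _ => he.sum_inner_products_le _
    _ = Module.finrank 𝕜 U := by simp [Submodule.norm_coe, b.norm_eq_one]

theorem OrthonormalBasis.sum_norm_sq_orthogonalProjectionOnto (e : OrthonormalBasis ι 𝕜 E)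
    (U : Submodule 𝕜 E) [FiniteDimensional 𝕜 U] :
    ∑ i, ‖(U.orthogonalProjectionOnto (e i) : E)‖ ^ 2 = Module.finrank 𝕜 U := by
  let b := stdOrthonormalBasis 𝕜 U
  rw [b.sum_norm_sq_orthogonalProjectionOnto_eq e]
  simp [e.sum_sq_norm_inner_right, Submodule.norm_coe, b.norm_eq_one]

end OrthogonalProjection

theorem exists_orthonormal_fin_of_le_rank {𝕜 E : Type*} [RCLike 𝕜] [NormedAddCommGroup E]
    [InnerProductSpace 𝕜 E] {n : ℕ} (hn : (n : Cardinal) ≤ Module.rank 𝕜 E) :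
    ∃ e : Fin n → E, Orthonormal 𝕜 e :=
  let ⟨_, hf⟩ := exists_linearIndependent_of_le_rank hn
  ⟨_, InnerProductSpace.gramSchmidtNormed_orthonormal hf⟩

theorem toENat_rank_eq_top_iff {K V : Type*} [DivisionRing K] [AddCommGroup V] [Module K V] :
    (Module.rank K V).toENat = ⊤ ↔ ¬ FiniteDimensional K V := by
  rw [← not_iff_not, not_not, ← Ne, ← lt_top_iff_ne_top, Cardinal.toENat_lt_top]
  exact Module.rank_lt_aleph0_iff

theorem toENNReal_toENat_rank_eq_finrank (K V : Type*) [DivisionRing K] [AddCommGroup V]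
    [Module K V] [FiniteDimensional K V] :
    ((Module.rank K V).toENat : ℝ≥0∞) = Module.finrank K V := by
  rw [← Module.finrank_eq_rank, Cardinal.toENat_nat, ENat.toENNReal_coe]

theorem ENNReal.mul_toENNReal_le_of_forall_natCast_le {c a : ℝ≥0∞} {d : ℕ∞}
    (h : ∀ n : ℕ, (n : ℕ∞) ≤ d → c * n ≤ a) : c * d ≤ a := by
  induction d using ENat.recTopCoe with
  | top =>
    rw [ENat.toENNReal_top, ← ENNReal.iSup_natCast, ENNReal.mul_iSup]
    exact iSup_le fun n => h n le_top
  | coe d => exact h d le_rfl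

theorem projFn_eq_orthogonalProjectionOnto {W : Submodule ℂ H} (hW : IsClosed (W : Set H))
    [W.HasOrthogonalProjection] (h : H) : projFn W h = W.orthogonalProjectionOnto h := by
  rw [projFn, dif_pos hW]

theorem Orthonormal.sum_ofReal_norm_sq_projFn_le {ι : Type*} [Fintype ι] {e : ι → H}
    (he : Orthonormal ℂ e) {W : Submodule ℂ H} (hW : IsClosed (W : Set H)) :
    ∑ i, ENNReal.ofReal (‖projFn W (e i)‖ ^ 2) ≤ (Module.rank ℂ W).toENat := by
  by_cases hfin : FiniteDimensional ℂ W
  · rw [toENNReal_toENat_rank_eq_finrank, ← ENNReal.ofReal_natCast,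
      ← ENNReal.ofReal_sum_of_nonneg fun i _ => sq_nonneg _]
    simp only [projFn_eq_orthogonalProjectionOnto hW]
    exact ENNReal.ofReal_le_ofReal (he.sum_norm_sq_orthogonalProjectionOnto_le W)
  · simp [(toENat_rank_eq_top_iff).2 hfin]

theorem OrthonormalBasis.sum_ofReal_norm_sq_projFn {ι : Type*} [Fintype ι]
    (e : OrthonormalBasis ι ℂ H) {W : Submodule ℂ H} (hW : IsClosed (W : Set H)) :
    ∑ i, ENNReal.ofReal (‖projFn W (e i)‖ ^ 2) = (Module.rank ℂ W).toENat := by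
  have : FiniteDimensional ℂ H := .of_basis e.toBasis
  rw [toENNReal_toENat_rank_eq_finrank, ← ENNReal.ofReal_natCast,
    ← ENNReal.ofReal_sum_of_nonneg fun i _ => sq_nonneg _]
  simp only [projFn_eq_orthogonalProjectionOnto hW, e.sum_norm_sq_orthogonalProjectionOnto W]

namespace IsCBessel

variable {μ : Measure X} {F : X → Submodule ℂ H} {v : X → ℝ} {B : ℝ}

theorem lintegral_eq_sum_lintegral (hv : Measurable v) (hF : IsCBessel μ F v B) {ι : Type*}
    [Fintype ι] (e : ι → H) :
    ∫⁻ x, ENNReal.ofReal (v x ^ 2) * ∑ i, ENNReal.ofReal (‖projFn (F x) (e i)‖ ^ 2) ∂μ =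
      ∑ i, ∫⁻ x, ENNReal.ofReal (v x ^ 2 * ‖projFn (F x) (e i)‖ ^ 2) ∂μ := by
  simp only [Finset.mul_sum, ← ENNReal.ofReal_mul (sq_nonneg _)]
  refine lintegral_finsetSum' _ fun i _ => ?_
  exact ENNReal.measurable_ofReal.comp_aemeasurable
    ((hv.pow_const 2).aemeasurable.mul ((hF.meas (e i)).norm.aemeasurable.pow_const 2))

theorem lintegral_le_ofReal_mul_rank (hv : Measurable v) (hF : IsCBessel μ F v B)
    [FiniteDimensional ℂ H] :
    ∫⁻ x, ENNReal.ofReal (v x ^ 2) * (Module.rank ℂ (F x)).toENat ∂μ ≤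
      ENNReal.ofReal B * (Module.rank ℂ H).toENat := by
  let e := stdOrthonormalBasis ℂ H
  calc ∫⁻ x, ENNReal.ofReal (v x ^ 2) * (Module.rank ℂ (F x)).toENat ∂μ
      = ∑ i, ∫⁻ x, ENNReal.ofReal (v x ^ 2 * ‖projFn (F x) (e i)‖ ^ 2) ∂μ := by
        simp only [← e.sum_ofReal_norm_sq_projFn (hF.closed _)]
        exact hF.lintegral_eq_sum_lintegral hv e
    _ ≤ ∑ _i : Fin (Module.finrank ℂ H), ENNReal.ofReal B := by
        refine Finset.sum_le_sum fun i _ => ?_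
        simpa [e.orthonormal.1 i] using hF.bessel (e i)
    _ = ENNReal.ofReal B * (Module.rank ℂ H).toENat := by
        simp [toENNReal_toENat_rank_eq_finrank, mul_comm]

end IsCBessel

namespace IsCFusionFrame

variable {μ : Measure X} {F : X → Submodule ℂ H} {v : X → ℝ} {A B : ℝ}

theorem lowerBound_le_upperBound [Nontrivial H] (hF : IsCFusionFrame μ F v A B) : A ≤ B := by
  obtain ⟨h, hh⟩ := exists_ne (0 : H)
  have hpos : 0 < ‖h‖ ^ 2 := by positivity
  have hAB := (ENNReal.ofReal_le_ofReal_iff' (q := B * ‖h‖ ^ 2)).1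
    ((hF.lower h).trans (hF.bessel h))
  exact le_of_mul_le_mul_right (hAB.resolve_right (mul_pos hF.posA hpos).not_ge) hpos

theorem card_mul_le_lintegral (hv : Measurable v) (hF : IsCFusionFrame μ F v A B) {ι : Type*}
    [Fintype ι] {e : ι → H} (he : Orthonormal ℂ e) :
    ENNReal.ofReal A * Fintype.card ι ≤
      ∫⁻ x, ENNReal.ofReal (v x ^ 2) * (Module.rank ℂ (F x)).toENat ∂μ :=
  calc ENNReal.ofReal A * Fintype.card ι = ∑ _i : ι, ENNReal.ofReal A := by
        simp [mul_comm]
    _ ≤ ∑ i, ∫⁻ x, ENNReal.ofReal (v x ^ 2 * ‖projFn (F x) (e i)‖ ^ 2) ∂μ :=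
        Finset.sum_le_sum fun i _ => by simpa [he.1 i] using hF.lower (e i)
    _ = ∫⁻ x, ENNReal.ofReal (v x ^ 2) * ∑ i, ENNReal.ofReal (‖projFn (F x) (e i)‖ ^ 2) ∂μ :=
        (hF.lintegral_eq_sum_lintegral hv e).symm
    _ ≤ _ := lintegral_mono fun x => by
        gcongr
        exact he.sum_ofReal_norm_sq_projFn_le (hF.closed x)

theorem ofReal_mul_rank_le_lintegral (hv : Measurable v) (hF : IsCFusionFrame μ F v A B) :
    ENNReal.ofReal A * (Module.rank ℂ H).toENat ≤
      ∫⁻ x, ENNReal.ofReal (v x ^ 2) * (Module.rank ℂ (F x)).toENat ∂μ := by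
  refine ENNReal.mul_toENNReal_le_of_forall_natCast_le fun n hn => ?_
  obtain ⟨e, he⟩ := exists_orthonormal_fin_of_le_rank (Cardinal.natCast_le_toENat.1 hn)
  simpa using hF.card_mul_le_lintegral hv he

theorem lintegral_le_ofReal_mul_rank (hv : Measurable v) (hF : IsCFusionFrame μ F v A B) :
    ∫⁻ x, ENNReal.ofReal (v x ^ 2) * (Module.rank ℂ (F x)).toENat ∂μ ≤
      ENNReal.ofReal B * (Module.rank ℂ H).toENat := by
  by_cases hfin : FiniteDimensional ℂ H
  · exact hF.toIsCBessel.lintegral_le_ofReal_mul_rank hv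
  · have : Nontrivial H := by
      contrapose! hfin
      infer_instance
    have hB : ENNReal.ofReal B ≠ 0 := (ENNReal.ofReal_pos.2 (hF.posA.trans_le hF.lowerBound_le_upperBound)).ne'
    simp [(toENat_rank_eq_top_iff).2 hfin, ENNReal.mul_top hB]

theorem ofReal_le_lintegral [FiniteDimensional ℂ H] [Nontrivial H] (hv : Measurable v)
    (hF : IsCFusionFrame μ F v A B) :
    ENNReal.ofReal A ≤ ∫⁻ x, ENNReal.ofReal (v x ^ 2) ∂μ := by
  have hdim : ((Module.rank ℂ H).toENat : ℝ≥0∞) ≠ 0 := by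
    simp [toENNReal_toENat_rank_eq_finrank, Module.finrank_pos.ne']
  have hdim_top : ((Module.rank ℂ H).toENat : ℝ≥0∞) ≠ ⊤ := by
    simp [toENNReal_toENat_rank_eq_finrank]
  refine (ENNReal.mul_le_mul_iff_left hdim hdim_top).1 ?_
  calc ENNReal.ofReal A * (Module.rank ℂ H).toENat
      ≤ ∫⁻ x, ENNReal.ofReal (v x ^ 2) * (Module.rank ℂ (F x)).toENat ∂μ :=
        hF.ofReal_mul_rank_le_lintegral hv
    _ ≤ ∫⁻ x, ENNReal.ofReal (v x ^ 2) * (Module.rank ℂ H).toENat ∂μ := lintegral_mono fun x => by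
        gcongr
        exact Submodule.rank_le (F x)
    _ = (∫⁻ x, ENNReal.ofReal (v x ^ 2) ∂μ) * (Module.rank ℂ H).toENat :=
        lintegral_mul_const' _ _ hdim_top

end IsCFusionFrame

theorem statement10_general {μ : Measure X} {F : X → Submodule ℂ H} {v : X → ℝ} {A B : ℝ}
    (hv : Measurable v)
    (hF : IsCFusionFrame μ F v A B) :
    (ENNReal.ofReal A * ((Module.rank ℂ H).toENat : ℝ≥0∞) ≤
        ∫⁻ x, ENNReal.ofReal ((v x) ^ 2) * (((Module.rank ℂ (F x)).toENat : ℝ≥0∞)) ∂μ ∧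
      ∫⁻ x, ENNReal.ofReal ((v x) ^ 2) * (((Module.rank ℂ (F x)).toENat : ℝ≥0∞)) ∂μ ≤
        ENNReal.ofReal B * ((Module.rank ℂ H).toENat : ℝ≥0∞)) ∧
    (FiniteDimensional ℂ H → Nontrivial H →
      ENNReal.ofReal A ≤ ∫⁻ x, ENNReal.ofReal ((v x) ^ 2) ∂μ) :=
  ⟨⟨hF.ofReal_mul_rank_le_lintegral hv, hF.lintegral_le_ofReal_mul_rank hv⟩,
    fun _ _ => hF.ofReal_le_lintegral hv⟩

/-- If `(F, v)` is a c-fusion frame with bounds `A, B`, then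
`A · dim H ≤ ∫ v(x)² dim F(x) dμ(x) ≤ B · dim H`; in particular, if `dim H < ∞`
(and `H ≠ 0`), then `A ≤ ∫ v(x)² dμ(x)`. -/
theorem statement10 {μ : Measure X} {F : X → Submodule ℂ H} {v : X → ℝ} {A B : ℝ}
    (hv : Measurable v) (hv0 : ∀ x, 0 ≤ v x)
    (hF : IsCFusionFrame μ F v A B) :
    (ENNReal.ofReal A * ((Module.rank ℂ H).toENat : ℝ≥0∞) ≤
        ∫⁻ x, ENNReal.ofReal ((v x) ^ 2) * (((Module.rank ℂ (F x)).toENat : ℝ≥0∞)) ∂μ ∧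
      ∫⁻ x, ENNReal.ofReal ((v x) ^ 2) * (((Module.rank ℂ (F x)).toENat : ℝ≥0∞)) ∂μ ≤
        ENNReal.ofReal B * ((Module.rank ℂ H).toENat : ℝ≥0∞)) ∧
    (FiniteDimensional ℂ H → Nontrivial H →
      ENNReal.ofReal A ≤ ∫⁻ x, ENNReal.ofReal ((v x) ^ 2) ∂μ) :=
  statement10_general hv hF
end
end

section
/- Let dim H < ∞ and let (F,v), (G,w) be c-Bessel mappings for H with Bessel bounds B_{F,v}, B_{G,w}. If Q ∈ B(L²(X,F), L²(X,G)) satisfies T_{G,w} Q T*_{F,v} = I_H, then ‖Q‖ ≥ (dim H)^{-1} / √(B_{F,v} B_{G,w}). -/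
/-!
A synthesis operator `T` of a c-Bessel mapping with bound `B` has norm at most `√B`: for
`f ∈ L²(X, F)` one has `⟪f x, h⟫ = ⟪f x, π_{F x} h⟫`, so Cauchy–Schwarz and the Bessel inequality
give `|⟪T f, h⟫| ≤ √B ‖f‖ ‖h‖`. Taking norms in `T_G Q T_F* = I` then yields
`1 ≤ ‖Q‖ √(B_F B_G)`, which is stronger than the claim because `(dim H)⁻¹ ≤ 1`.
-/

open MeasureTheory
open scoped ENNReal InnerProductSpace

noncomputable section

variable {H : Type} [NormedAddCommGroup H] [InnerProductSpace ℂ H] [CompleteSpace H]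
variable {X : Type} [MeasurableSpace X]

open Filter Topology

theorem le_mul_of_forall_le_amgm {A a b : ℝ} (ha : 0 ≤ a) (hb : 0 ≤ b)
    (h : ∀ t > 0, A ≤ t / 2 * a ^ 2 + b ^ 2 / (2 * t)) : A ≤ a * b := by
  -- Shifting `a, b` by `ε` keeps the optimal `t = b / a` well defined when `a = 0`.
  have hε : ∀ ε > 0, A ≤ (a + ε) * (b + ε) := fun ε hε => by
    set t := (b + ε) / (a + ε)
    have ht : 0 < t := by positivity
    calc A ≤ t / 2 * a ^ 2 + b ^ 2 / (2 * t) := h t ht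
      _ ≤ t / 2 * (a + ε) ^ 2 + (b + ε) ^ 2 / (2 * t) := by gcongr <;> linarith
      _ = (a + ε) * (b + ε) := by simp only [t]; field_simp; ring
  have hlim : Tendsto (fun ε => (a + ε) * (b + ε)) (𝓝 0) (𝓝 (a * b)) :=
    Continuous.tendsto' (by fun_prop) 0 _ (by simp)
  exact ge_of_tendsto (hlim.mono_left nhdsWithin_le_nhds)
    (eventually_nhdsWithin_of_forall (s := Set.Ioi 0) hε)

section

variable {α : Type*} [MeasurableSpace α] {μ : Measure α}

-- Cauchy–Schwarz with only one factor measurable (Mathlib's Hölder inequality needs both, but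
-- the weights `v` are arbitrary functions): integrate `f g ≤ t f² / 2 + g² / (2 t)`, optimise `t`.
theorem lintegral_ofReal_mul_le_of_lintegral_sq_le {f g : α → ℝ} (hf : AEMeasurable f μ)
    {a b : ℝ} (ha : 0 ≤ a) (hb : 0 ≤ b)
    (hfa : ∫⁻ x, ENNReal.ofReal (f x ^ 2) ∂μ ≤ ENNReal.ofReal (a ^ 2))
    (hgb : ∫⁻ x, ENNReal.ofReal (g x ^ 2) ∂μ ≤ ENNReal.ofReal (b ^ 2)) :
    ∫⁻ x, ENNReal.ofReal (f x * g x) ∂μ ≤ ENNReal.ofReal (a * b) := by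
  have hamgm : ∀ t > 0, ∫⁻ x, ENNReal.ofReal (f x * g x) ∂μ ≤
      ENNReal.ofReal (t / 2 * a ^ 2 + b ^ 2 / (2 * t)) := fun t ht => by
    have hpt : ∀ x, ENNReal.ofReal (f x * g x) ≤
        ENNReal.ofReal (t / 2) * ENNReal.ofReal (f x ^ 2) +
          ENNReal.ofReal (1 / (2 * t)) * ENNReal.ofReal (g x ^ 2) := fun x => by
      rw [← ENNReal.ofReal_mul (by positivity), ← ENNReal.ofReal_mul (by positivity),
        ← ENNReal.ofReal_add (by positivity) (by positivity)]
      refine ENNReal.ofReal_le_ofReal (sub_nonneg.1 ?_)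
      have hsq : t / 2 * f x ^ 2 + 1 / (2 * t) * g x ^ 2 - f x * g x
          = (t * f x - g x) ^ 2 / (2 * t) := by field_simp; ring
      rw [hsq]
      positivity
    calc ∫⁻ x, ENNReal.ofReal (f x * g x) ∂μ
        ≤ ∫⁻ x, (ENNReal.ofReal (t / 2) * ENNReal.ofReal (f x ^ 2) +
            ENNReal.ofReal (1 / (2 * t)) * ENNReal.ofReal (g x ^ 2)) ∂μ := lintegral_mono hpt
      _ = ENNReal.ofReal (t / 2) * ∫⁻ x, ENNReal.ofReal (f x ^ 2) ∂μ +
            ENNReal.ofReal (1 / (2 * t)) * ∫⁻ x, ENNReal.ofReal (g x ^ 2) ∂μ := by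
        rw [lintegral_add_left' ((hf.pow_const 2).ennreal_ofReal.const_mul _),
          lintegral_const_mul' _ _ ENNReal.ofReal_ne_top,
          lintegral_const_mul' _ _ ENNReal.ofReal_ne_top]
      _ ≤ ENNReal.ofReal (t / 2) * ENNReal.ofReal (a ^ 2) +
            ENNReal.ofReal (1 / (2 * t)) * ENNReal.ofReal (b ^ 2) := by gcongr
      _ = ENNReal.ofReal (t / 2 * a ^ 2 + b ^ 2 / (2 * t)) := by
        rw [← ENNReal.ofReal_mul (by positivity), ← ENNReal.ofReal_mul (by positivity),
          ← ENNReal.ofReal_add (by positivity) (by positivity), one_div_mul_eq_div]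
  have hfin : ∫⁻ x, ENNReal.ofReal (f x * g x) ∂μ ≠ ⊤ :=
    ne_top_of_le_ne_top ENNReal.ofReal_ne_top (hamgm 1 one_pos)
  rw [ENNReal.le_ofReal_iff_toReal_le hfin (by positivity)]
  exact le_mul_of_forall_le_amgm ha hb fun t ht =>
    ENNReal.toReal_le_of_le_ofReal (by positivity) (hamgm t ht)

theorem L2.lintegral_ofReal_norm_sq {𝕜 E : Type*} [RCLike 𝕜] [NormedAddCommGroup E]
    [InnerProductSpace 𝕜 E] (f : Lp E 2 μ) :
    ∫⁻ x, ENNReal.ofReal (‖f x‖ ^ 2) ∂μ = ENNReal.ofReal (‖f‖ ^ 2) := by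
  have hint : Integrable (fun x => ‖f x‖ ^ 2) μ :=
    (L2.integrable_inner (𝕜 := 𝕜) f f).re.congr
      (Filter.Eventually.of_forall fun x => inner_self_eq_norm_sq _)
  have hnorm : ‖f‖ ^ 2 = ∫ x, ‖f x‖ ^ 2 ∂μ := by
    rw [← inner_self_eq_norm_sq (𝕜 := 𝕜) f, L2.inner_def,
      ← integral_re (L2.integrable_inner f f)]
    exact integral_congr_ae (Filter.Eventually.of_forall fun x => inner_self_eq_norm_sq _)
  rw [hnorm, ofReal_integral_eq_lintegral_ofReal hint
    (Filter.Eventually.of_forall fun x => sq_nonneg _)]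

end

theorem ContinuousLinearMap.opNorm_le_of_norm_inner_le {𝕜 E F : Type*} [RCLike 𝕜]
    [NormedAddCommGroup E] [NormedSpace 𝕜 E] [NormedAddCommGroup F] [InnerProductSpace 𝕜 F]
    (T : E →L[𝕜] F) {C : ℝ} (hC : 0 ≤ C) (h : ∀ x y, ‖⟪T x, y⟫_𝕜‖ ≤ C * ‖x‖ * ‖y‖) :
    ‖T‖ ≤ C := by
  refine T.opNorm_le_bound hC fun x => ?_
  rcases (norm_nonneg (T x)).eq_or_lt with hTx | hTx
  · rw [← hTx]
    positivity
  · refine le_of_mul_le_mul_right ?_ hTx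
    simpa [inner_self_eq_norm_sq_to_K, ← sq] using h x (T x)

theorem inner_projFn_eq_of_mem {W : Submodule ℂ H} (hW : IsClosed (W : Set H)) {y : H}
    (hy : y ∈ W) (h : H) : ⟪y, projFn W h⟫_ℂ = ⟪y, h⟫_ℂ := by
  have : CompleteSpace W := hW.completeSpace_coe
  rw [projFn, dif_pos hW]
  exact Submodule.inner_orthogonalProjectionOnto_eq_of_mem_left ⟨y, hy⟩ h

section

variable {μ : Measure X} {F : X → Submodule ℂ H} {v : X → ℝ} {B : ℝ}

theorem IsCBessel.norm_integral_mul_inner_le (hF : IsCBessel μ F v B) (f : L2F μ F) (h : H) :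
    ‖∫ x, (v x : ℂ) * ⟪(f : Lp H 2 μ) x, h⟫_ℂ ∂μ‖ ≤ ‖f‖ * (√B * ‖h‖) := by
  have hpt : ∀ᵐ x ∂μ, ‖(v x : ℂ) * ⟪(f : Lp H 2 μ) x, h⟫_ℂ‖ ≤
      ‖(f : Lp H 2 μ) x‖ * (|v x| * ‖projFn (F x) h‖) := by
    filter_upwards [f.2] with x hx
    rw [norm_mul, Complex.norm_real, Real.norm_eq_abs,
      ← inner_projFn_eq_of_mem (hF.closed x) hx, mul_left_comm]
    gcongr
    exact norm_inner_le_norm _ _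
  have hweights : ∫⁻ x, ENNReal.ofReal ((|v x| * ‖projFn (F x) h‖) ^ 2) ∂μ ≤
      ENNReal.ofReal ((√B * ‖h‖) ^ 2) := by
    simp_rw [mul_pow, sq_abs, Real.sq_sqrt']
    exact (hF.bessel h).trans (ENNReal.ofReal_le_ofReal (by gcongr; exact le_max_left _ _))
  have hCS := lintegral_ofReal_mul_le_of_lintegral_sq_le
    (Lp.aestronglyMeasurable (f : Lp H 2 μ)).norm.aemeasurable (norm_nonneg f) (by positivity)
    (L2.lintegral_ofReal_norm_sq (𝕜 := ℂ) (f : Lp H 2 μ)).le hweights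
  calc ‖∫ x, (v x : ℂ) * ⟪(f : Lp H 2 μ) x, h⟫_ℂ ∂μ‖
      ≤ (∫⁻ x, ENNReal.ofReal ‖(v x : ℂ) * ⟪(f : Lp H 2 μ) x, h⟫_ℂ‖ ∂μ).toReal :=
        norm_integral_le_lintegral_norm _
    _ ≤ ‖f‖ * (√B * ‖h‖) := ENNReal.toReal_le_of_le_ofReal (by positivity)
        ((lintegral_mono_ae (hpt.mono fun _ hx => ENNReal.ofReal_le_ofReal hx)).trans hCS)

theorem IsSynthesis.opNorm_le (hF : IsCBessel μ F v B) {T : L2F μ F →L[ℂ] H}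
    (hT : IsSynthesis μ F v T) : ‖T‖ ≤ √B :=
  T.opNorm_le_of_norm_inner_le (Real.sqrt_nonneg B) fun f h => by
    rw [hT, mul_assoc, mul_left_comm]
    exact hF.norm_integral_mul_inner_le f h

end

theorem statement11_general
    {μ : Measure X} {F G : X → Submodule ℂ H} {v w : X → ℝ} {BF BG : ℝ}
    (hF : IsCBessel μ F v BF) (hG : IsCBessel μ G w BG) [CompleteSpace ↥(L2F μ F)]
    (TF : L2F μ F →L[ℂ] H) (hTF : IsSynthesis μ F v TF)
    (TG : L2F μ G →L[ℂ] H) (hTG : IsSynthesis μ G w TG)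
    (Q : (L2F μ F : Type) →L[ℂ] (L2F μ G : Type))
    (hQ : TG.comp (Q.comp (ContinuousLinearMap.adjoint TF)) = ContinuousLinearMap.id ℂ H) :
    ‖Q‖ ≥ ((Module.finrank ℂ H : ℝ))⁻¹ / Real.sqrt (BF * BG) := by
  rcases (Module.finrank ℂ H).eq_zero_or_pos with hdim | hdim
  · rw [hdim, Nat.cast_zero, inv_zero, zero_div]
    exact norm_nonneg Q
  have : Nontrivial H := Module.nontrivial_of_finrank_pos hdim
  have hnorm : 1 ≤ ‖Q‖ * (√BF * √BG) := calc
    1 = ‖TG.comp (Q.comp (ContinuousLinearMap.adjoint TF))‖ := by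
      rw [hQ, ContinuousLinearMap.norm_id]
    _ ≤ ‖TG‖ * (‖Q‖ * ‖ContinuousLinearMap.adjoint TF‖) :=
      (TG.opNorm_comp_le _).trans (by gcongr; exact Q.opNorm_comp_le _)
    _ ≤ √BG * (‖Q‖ * √BF) := by
      rw [LinearIsometryEquiv.norm_map]
      gcongr
      exacts [hTG.opNorm_le hG, hTF.opNorm_le hF]
    _ = ‖Q‖ * (√BF * √BG) := by ring
  have hprod : 0 < √BF * √BG := pos_of_mul_pos_right (one_pos.trans_le hnorm) (norm_nonneg Q)
  have hBF : 0 ≤ BF := (Real.sqrt_pos.1 (pos_of_mul_pos_left hprod (Real.sqrt_nonneg _))).le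
  rw [ge_iff_le, Real.sqrt_mul hBF, div_le_iff₀ hprod]
  exact (Nat.cast_inv_le_one _).trans hnorm

/-- Let `dim H < ∞` and `(F, v)`, `(G, w)` be c-Bessel with bounds
`B_F, B_G`. If `Q` satisfies `T_{G,w} Q T*_{F,v} = I_H`, then
`‖Q‖ ≥ (dim H)⁻¹ / √(B_F B_G)`. -/
theorem statement11 [FiniteDimensional ℂ H]
    {μ : Measure X} {F G : X → Submodule ℂ H} {v w : X → ℝ} {BF BG : ℝ}
    (hF : IsCBessel μ F v BF) (hG : IsCBessel μ G w BG) [CompleteSpace ↥(L2F μ F)]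
    (TF : L2F μ F →L[ℂ] H) (hTF : IsSynthesis μ F v TF)
    (TG : L2F μ G →L[ℂ] H) (hTG : IsSynthesis μ G w TG)
    (Q : (L2F μ F : Type) →L[ℂ] (L2F μ G : Type))
    (hQ : TG.comp (Q.comp (ContinuousLinearMap.adjoint TF)) = ContinuousLinearMap.id ℂ H) :
    ‖Q‖ ≥ ((Module.finrank ℂ H : ℝ))⁻¹ / Real.sqrt (BF * BG) :=
  statement11_general hF hG TF hTF TG hTG Q hQ
end
end
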